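/- Let (A, ν) be an integral domain with a negative pseudovaluation such that every nonzero element of A is localizing with respect to ν. Let A → B be a finite ring homomorphism such that B is a free A-module of finite rank, and let μ be an admissible pseudovaluation on the finitely generated A-algebra B. Then every non-zero divisor of B is localizing with respect to μ. -/

import Mathlib

open scoped Classical

noncomputable section

/-- A pseudovaluation on a commutative ring `A`: a function `ν : A → ℝ ∪ {±∞}` with
`ν 0 = ∞`, `ν 1 = 0`, `ν (a - b) ≥ min (ν a) (ν b)`, and `ν (a*b) ≥ ν a + ν b`
whenever `ν a ≠ -∞` and `ν b ≠ -∞`. -/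
structure IsPseudovaluation {A : Type*} [CommRing A] (ν : A → EReal) : Prop where
  map_zero : ν 0 = ⊤
  map_one : ν 1 = 0
  min_le_sub : ∀ a b : A, min (ν a) (ν b) ≤ ν (a - b)
  add_le_mul : ∀ a b : A, ν a ≠ ⊥ → ν b ≠ ⊥ → ν a + ν b ≤ ν (a * b)

/-- A proper pseudovaluation never takes the value `-∞`. -/
def IsProperPV {A : Type*} [CommRing A] (ν : A → EReal) : Prop :=
  IsPseudovaluation ν ∧ ∀ a : A, ν a ≠ ⊥

/-- A negative pseudovaluation is proper and satisfies `ν a ≤ 0` for `a ≠ 0`. -/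
def IsNegativePV {A : Type*} [CommRing A] (ν : A → EReal) : Prop :=
  IsPseudovaluation ν ∧ (∀ a : A, ν a ≠ ⊥) ∧ ∀ a : A, a ≠ 0 → ν a ≤ 0

/-- `f` is localizing with respect to `ν` if there are `C > 0`, `D ≥ 0` with
`ν (fⁿ x) ≤ C · ν x + n D` for all `n` and `x`. -/
def IsLocalizing {A : Type*} [CommRing A] (ν : A → EReal) (f : A) : Prop :=
  ∃ C D : ℝ, 0 < C ∧ 0 ≤ D ∧ ∀ (n : ℕ) (x : A),
    ν (f ^ n * x) ≤ (C : EReal) * ν x + (((n : ℝ) * D : ℝ) : EReal)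

/-- Two functions `A → ℝ ∪ {±∞}` are linearly equivalent if they dominate each other
up to positive multiplicative and nonnegative additive constants. -/
def LinearlyEquivalent {A : Type*} (ν₁ ν₂ : A → EReal) : Prop :=
  ∃ c₁ c₂ d₁ d₂ : ℝ, 0 < c₁ ∧ 0 < c₂ ∧ 0 ≤ d₁ ∧ 0 ≤ d₂ ∧
    (∀ a : A, (c₂ : EReal) * ν₂ a - (d₂ : EReal) ≤ ν₁ a) ∧
    (∀ a : A, (c₁ : EReal) * ν₁ a - (d₁ : EReal) ≤ ν₂ a)

/-- The weighted degree pseudovaluation on a multivariate polynomial ring: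
`ν (Σ_k c_k T^k) = inf_k { μ(c_k) - Σ_i k_i d_i }`. -/
def weightedDegPV {R : Type*} [CommRing R] (μ : R → EReal) {m : ℕ} (d : Fin m → ℝ)
    (f : MvPolynomial (Fin m) R) : EReal :=
  ⨅ k : Fin m →₀ ℕ, (μ (MvPolynomial.coeff k f) - ((∑ i, (k i : ℝ) * d i : ℝ) : EReal))

/-- A pseudovaluation `τ` on an `R`-algebra `B` is admissible (relative to `μ` on `R`)
if it is the quotient of a weighted degree pseudovaluation under some surjection
from a polynomial ring. -/
def IsAdmissiblePV {R B : Type*} [CommRing R] [CommRing B] [Algebra R B]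
    (μ : R → EReal) (τ : B → EReal) : Prop :=
  ∃ (m : ℕ) (π : MvPolynomial (Fin m) R →ₐ[R] B) (d : Fin m → ℝ),
    Function.Surjective π ∧ (∀ i, 0 < d i) ∧
    ∀ b : B, τ b = ⨆ (f : MvPolynomial (Fin m) R) (_ : π f = b), weightedDegPV μ d f

/-- The pseudovaluation `μ (Σ_i a_i X^i) = min_i { ν(a_i) - i·d }` on `A[X]`. -/
def polyPV {A : Type*} [CommRing A] (ν : A → EReal) (d : ℝ) (g : Polynomial A) : EReal :=
  ⨅ i : ℕ, (ν (g.coeff i) - (((i : ℝ) * d : ℝ) : EReal))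

/-- The induced pseudovaluation on the localization `A_f`: the quotient of `polyPV ν d`
under the map `A[X] → A_f`, `X ↦ f⁻¹`. -/
def locPV {A : Type*} [CommRing A] (ν : A → EReal) (f : A) (d : ℝ)
    (z : Localization.Away f) : EReal :=
  ⨆ (g : Polynomial A)
    (_ : Polynomial.aeval (IsLocalization.Away.invSelf (S := Localization.Away f) f) g = z),
    polyPV ν d g

/-- The Gauss norm `γ_ε(α) = inf_i { i + ε p^{-i} ν(a_i) }` of a Witt vector. -/
def gaussNorm (p : ℕ) {A : Type*} [CommRing A] (ν : A → EReal) (ε : ℝ)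
    (α : WittVector p A) : EReal :=
  ⨅ i : ℕ, ((i : EReal) + ((ε * (p : ℝ) ^ (-(i : ℤ)) : ℝ) : EReal) * ν (α.coeff i))

/-- A Witt vector is overconvergent if `γ_ε(α) ≠ -∞` for some `ε > 0`. -/
def IsOverconvergent (p : ℕ) {A : Type*} [CommRing A] (ν : A → EReal)
    (α : WittVector p A) : Prop :=
  ∃ ε : ℝ, 0 < ε ∧ gaussNorm p ν ε α ≠ ⊥

/-- The trivial valuation on an integral domain: `ν 0 = ∞` and `ν a = 0` for `a ≠ 0`. -/
def trivialPV (K : Type*) [Zero K] : K → EReal :=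
  fun a => if a = 0 then (⊤ : EReal) else 0

/-!
Choose an `A`-basis of `B` and let `ν_B(x) = min_i ν(x_i)` in coordinates. Bounding the
coordinates of monomials in the generators of the presentation shows that `μ` and `ν_B` are
linearly equivalent, and linear equivalence preserves the localizing property. A non-zero divisor
`b` of `B` divides some `a ≠ 0` of `A` (a nonzero coefficient of an integral equation of `b`),
and `a` is localizing for `ν_B` because it acts coordinatewise. Since
`ν_B(uv) ≥ ν_B(u) + ν_B(v) - E`, writing `a = bc` gives
`ν_B(bⁿx) ≤ ν_B(aⁿx) - ν_B(cⁿ) + E`, and `ν_B(cⁿ)` is bounded below by a linear function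
of `n`.
-/

open scoped nonZeroDivisors

theorem EReal.exists_coe_le_of_ne_bot {ι : Type*} [Finite ι] (v : ι → EReal)
    (hv : ∀ i, v i ≠ ⊥) : ∃ r ≤ (0 : ℝ), ∀ i, (r : EReal) ≤ v i := by
  obtain ⟨r, hr⟩ := Finite.exists_ge fun i => (v i).toReal
  exact ⟨min r 0, min_le_right _ _, fun i => (EReal.coe_le_coe_iff.mpr
    ((min_le_left _ _).trans (hr i))).trans (EReal.coe_toReal_le (hv i))⟩

theorem exists_forall_le_mul {ι : Type*} [Finite ι] {d : ι → ℝ} (hd : ∀ i, 0 < d i)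
    (a : ℝ) : ∃ c ≥ (1 : ℝ), ∀ i, a ≤ c * d i := by
  obtain ⟨M, hM⟩ := Finite.exists_le fun i => a / d i
  exact ⟨max M 1, le_max_right _ _, fun i =>
    (div_le_iff₀ (hd i)).mp ((hM i).trans (le_max_left M 1))⟩

theorem pow_mul_ne_zero_of_mem_nonZeroDivisors {R : Type*} [CommMonoidWithZero R] {f x : R}
    (hf : f ∈ R⁰) (hx : x ≠ 0) (n : ℕ) : f ^ n * x ≠ 0 :=
  (mul_left_mem_nonZeroDivisors_eq_zero_iff (pow_mem hf n)).not.mpr hx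

section NegativeFn

def IsNegativeFn {R : Type*} [Zero R] (ν : R → EReal) : Prop :=
  ν 0 = ⊤ ∧ ∀ x, x ≠ 0 → ν x ≠ ⊥ ∧ ν x ≤ 0

namespace IsNegativeFn

variable {R : Type*} [Zero R] {ν : R → EReal}

theorem ne_bot (hν : IsNegativeFn ν) (x : R) : ν x ≠ ⊥ := by
  rcases eq_or_ne x 0 with rfl | hx
  · simp [hν.1]
  · exact (hν.2 x hx).1

theorem coe_toReal (hν : IsNegativeFn ν) {x : R} (hx : x ≠ 0) :
    ((ν x).toReal : EReal) = ν x :=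
  EReal.coe_toReal ((hν.2 x hx).2.trans_lt EReal.zero_lt_top).ne (hν.ne_bot x)

theorem toReal_nonpos (hν : IsNegativeFn ν) (x : R) : (ν x).toReal ≤ 0 := by
  rcases eq_or_ne x 0 with rfl | hx
  · simp [hν.1]
  · exact EReal.toReal_nonpos (hν.2 x hx).2

end IsNegativeFn

variable {R : Type*} [CommRing R] {ν : R → EReal}

theorem IsNegativePV.isNegativeFn (hν : IsNegativePV ν) : IsNegativeFn ν :=
  ⟨hν.1.map_zero, fun x hx => ⟨hν.2.1 x, hν.2.2 x hx⟩⟩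

theorem IsNegativePV.isProperPV (hν : IsNegativePV ν) : IsProperPV ν :=
  ⟨hν.1, hν.2.1⟩

/-- Shrinking `C` to `min C 1` handles `n = 0` (as `ν ≤ 0`), and `D₀` is absorbed into the
linear term for `n ≥ 1`. -/
theorem isLocalizing_of_toReal_le (hν : IsNegativeFn ν) {f : R} (hf : f ∈ R⁰) {C D D₀ : ℝ}
    (hC : 0 < C) (h : ∀ (n : ℕ) (x : R), x ≠ 0 →
      (ν (f ^ n * x)).toReal ≤ C * (ν x).toReal + n * D + D₀) :
    IsLocalizing ν f := by
  refine ⟨min C 1, max D 0 + max D₀ 0, lt_min hC one_pos, by positivity, fun n x => ?_⟩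
  rcases eq_or_ne x 0 with rfl | hx
  · rw [mul_zero, hν.1, EReal.coe_mul_top_of_pos (lt_min hC one_pos), EReal.top_add_coe]
  rw [← hν.coe_toReal hx, ← hν.coe_toReal (pow_mul_ne_zero_of_mem_nonZeroDivisors hf hx n)]
  norm_cast
  have hs := hν.toReal_nonpos x
  have hmin : min C 1 * (ν x).toReal ≥ C * (ν x).toReal :=
    mul_le_mul_of_nonpos_right (min_le_left _ _) hs
  rcases n with _ | n
  · simp only [pow_zero, one_mul, Nat.cast_zero, zero_mul, add_zero]
    nlinarith [min_le_right C 1]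
  · have := h (n + 1) x hx
    push_cast at this ⊢
    nlinarith [le_max_left D 0, le_max_right D 0, le_max_left D₀ 0, le_max_right D₀ 0,
      (n.cast_nonneg : (0 : ℝ) ≤ n)]

theorem IsLocalizing.of_linearlyEquivalent {ν₁ ν₂ : R → EReal} (hν₁ : IsNegativeFn ν₁)
    (hν₂ : IsNegativeFn ν₂) (h : LinearlyEquivalent ν₁ ν₂) {f : R} (hf : f ∈ R⁰)
    (hloc : IsLocalizing ν₁ f) : IsLocalizing ν₂ f := by
  obtain ⟨c₁, c₂, d₁, d₂, hc₁, hc₂, -, -, h₂₁, h₁₂⟩ := h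
  obtain ⟨C, D, hC, -, hfC⟩ := hloc
  refine isLocalizing_of_toReal_le hν₂ hf (C := C / (c₁ * c₂)) (D := D / c₂)
    (D₀ := (C * d₁ + c₁ * d₂) / (c₁ * c₂)) (by positivity) fun n x hx => ?_
  have hfx := pow_mul_ne_zero_of_mem_nonZeroDivisors hf hx n
  have hy := h₂₁ (f ^ n * x)
  have hx₁₂ := h₁₂ x
  have hfC := hfC n x
  rw [← hν₁.coe_toReal hx, ← hν₂.coe_toReal hx] at hx₁₂
  rw [← hν₁.coe_toReal hfx, ← hν₂.coe_toReal hfx] at hy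
  rw [← hν₁.coe_toReal hx, ← hν₁.coe_toReal hfx] at hfC
  norm_cast at hy hx₁₂ hfC
  set s := (ν₂ x).toReal
  rw [show C / (c₁ * c₂) * s + n * (D / c₂) + (C * d₁ + c₁ * d₂) / (c₁ * c₂) =
      (C * (s + d₁) + c₁ * (n * D + d₂)) / (c₁ * c₂) by field_simp; ring,
    le_div_iff₀ (by positivity)]
  nlinarith [mul_le_mul_of_nonneg_left hx₁₂ hC.le]

end NegativeFn

section QuasiMultiplicative

variable {M : Type*} {φ : M → EReal} {E : ℝ}

theorem coe_le_apply_mul [Mul M] (hφ : ∀ x y, φ x + φ y - E ≤ φ (x * y)) {x y : M}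
    {p q : ℝ} (hx : (p : EReal) ≤ φ x) (hy : (q : EReal) ≤ φ y) :
    ((p + q - E : ℝ) : EReal) ≤ φ (x * y) :=
  le_trans (by push_cast; exact EReal.sub_le_sub (add_le_add hx hy) le_rfl) (hφ x y)

theorem coe_le_apply_pow_mul [Monoid M] (hφ : ∀ x y, φ x + φ y - E ≤ φ (x * y))
    {z y : M} {q r : ℝ} (hz : (q : EReal) ≤ φ z) (hy : (r : EReal) ≤ φ y) (n : ℕ) :
    ((r + n * (q - E) : ℝ) : EReal) ≤ φ (z ^ n * y) := by
  induction n with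
  | zero => simpa using hy
  | succ n ih =>
    rw [pow_succ', mul_assoc]
    convert coe_le_apply_mul hφ hz ih using 2
    push_cast
    ring

theorem coe_le_apply_prod_pow_mul [CommMonoid M] (hφ : ∀ x y, φ x + φ y - E ≤ φ (x * y))
    {J : Type*} (s : Finset J) (z : J → M) (k : J → ℕ) (q : J → ℝ)
    (hz : ∀ j ∈ s, (q j : EReal) ≤ φ (z j)) {y : M} {r : ℝ} (hy : (r : EReal) ≤ φ y) :
    ((r + ∑ j ∈ s, k j * (q j - E) : ℝ) : EReal) ≤ φ ((∏ j ∈ s, z j ^ k j) * y) := by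
  classical
  induction s using Finset.induction with
  | empty => simpa using hy
  | insert a s ha ih =>
    rw [Finset.prod_insert ha, mul_assoc, Finset.sum_insert ha, add_left_comm, add_comm]
    exact coe_le_apply_pow_mul hφ (hz a (Finset.mem_insert_self a s))
      (ih fun j hj => hz j (Finset.mem_insert_of_mem hj)) (k a)

end QuasiMultiplicative

theorem IsLocalizing.of_dvd {R : Type*} [CommRing R] {φ : R → EReal} {E : ℝ}
    (hφ : IsNegativeFn φ) (hmul : ∀ x y, φ x + φ y - E ≤ φ (x * y)) {a b : R}
    (ha : IsLocalizing φ a) (hb : b ∈ R⁰) (hba : b ∣ a) : IsLocalizing φ b := by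
  obtain ⟨c, rfl⟩ := hba
  obtain ⟨C, D, hC, -, hbcC⟩ := ha
  have hc := EReal.coe_toReal_le (hφ.ne_bot c)
  have h1 := EReal.coe_toReal_le (hφ.ne_bot 1)
  refine isLocalizing_of_toReal_le hφ hb (D := D - ((φ c).toReal - E))
    (D₀ := E - (φ 1).toReal) hC fun n x hx => ?_
  have hcn := coe_le_apply_pow_mul hmul hc h1 n
  rw [mul_one] at hcn
  have hbound := (coe_le_apply_mul hmul hcn (EReal.coe_toReal_le (hφ.ne_bot (b ^ n * x)))).trans
    (le_of_eq_of_le (by rw [mul_pow, mul_comm (b ^ n) (c ^ n), mul_assoc]) (hbcC n x))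
  rw [← hφ.coe_toReal hx] at hbound
  norm_cast at hbound
  linarith

namespace IsPseudovaluation

variable {A : Type*} [CommRing A] {ν : A → EReal}

theorem map_neg (hν : IsPseudovaluation ν) (a : A) : ν (-a) = ν a := by
  have h : ∀ x : A, ν x ≤ ν (-x) := fun x => by
    simpa [hν.map_zero] using hν.min_le_sub 0 x
  exact le_antisymm (by simpa using h (-a)) (h a)

theorem min_le_add (hν : IsPseudovaluation ν) (a b : A) : min (ν a) (ν b) ≤ ν (a + b) := by
  simpa [hν.map_neg] using hν.min_le_sub a (-b)

theorem le_sum (hν : IsPseudovaluation ν) {ι : Type*} (s : Finset ι) (g : ι → A) {z : EReal}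
    (h : ∀ i ∈ s, z ≤ ν (g i)) : z ≤ ν (∑ i ∈ s, g i) := by
  classical
  induction s using Finset.induction with
  | empty => simp [hν.map_zero]
  | insert a s ha ih =>
    rw [Finset.sum_insert ha]
    exact (le_min (h a (Finset.mem_insert_self a s))
      (ih fun i hi => h i (Finset.mem_insert_of_mem hi))).trans (hν.min_le_add _ _)

end IsPseudovaluation

section WeightedDegree

variable {A : Type*} [CommRing A] {ν : A → EReal} {m : ℕ} {d : Fin m → ℝ}

theorem weightedDegPV_le (f : MvPolynomial (Fin m) A) (k : Fin m →₀ ℕ) :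
    weightedDegPV ν d f ≤
      ν (MvPolynomial.coeff k f) - ((∑ i, (k i : ℝ) * d i : ℝ) : EReal) :=
  iInf_le _ k

theorem isNegativeFn_weightedDegPV (hν : IsNegativeFn ν) (hd : ∀ i, 0 ≤ d i) :
    IsNegativeFn (weightedDegPV ν d) := by
  have hwt : ∀ k : Fin m →₀ ℕ, 0 ≤ ∑ i, (k i : ℝ) * d i := fun k =>
    Finset.sum_nonneg fun i _ => mul_nonneg (Nat.cast_nonneg _) (hd i)
  refine ⟨by simp [weightedDegPV, hν.1], fun f hf => ⟨?_, ?_⟩⟩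
  · obtain ⟨k₀, -, hk₀⟩ := f.support.exists_min_image
      (fun k => ν (MvPolynomial.coeff k f) - ((∑ i, (k i : ℝ) * d i : ℝ) : EReal))
      (MvPolynomial.support_nonempty.mpr hf)
    have hk₀_ne_bot :
        ν (MvPolynomial.coeff k₀ f) - ((∑ i, (k₀ i : ℝ) * d i : ℝ) : EReal) ≠ ⊥ := by
      rw [sub_eq_add_neg, ← EReal.coe_neg]
      exact EReal.add_ne_bot_iff.mpr ⟨hν.ne_bot _, EReal.coe_ne_bot _⟩
    refine ne_bot_of_le_ne_bot hk₀_ne_bot (le_iInf fun k => ?_)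
    by_cases hk : k ∈ f.support
    · exact hk₀ k hk
    · simp [MvPolynomial.notMem_support_iff.mp hk, hν.1]
  · obtain ⟨k, hk⟩ := MvPolynomial.ne_zero_iff.mp hf
    exact (weightedDegPV_le f k).trans
      (EReal.sub_nonpos.mpr (((hν.2 _ hk).2).trans (EReal.coe_nonneg.mpr (hwt k))))

theorem le_weightedDegPV_sum_C_mul (hν : IsProperPV ν) {ι : Type*} (s : Finset ι) (a : ι → A)
    (g : ι → MvPolynomial (Fin m) A) {z : EReal}
    (h : ∀ i ∈ s, z ≤ ν (a i) + weightedDegPV ν d (g i)) :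
    z ≤ weightedDegPV ν d (∑ i ∈ s, MvPolynomial.C (a i) * g i) := by
  refine le_iInf fun k => ?_
  rw [EReal.le_sub_iff_add_le (Or.inl (EReal.coe_ne_bot _)) (Or.inl (EReal.coe_ne_top _))]
  simp only [MvPolynomial.coeff_sum, MvPolynomial.coeff_C_mul]
  refine hν.1.le_sum _ _ fun i hi => ?_
  set w : ℝ := ∑ j, (k j : ℝ) * d j
  calc z + w ≤ ν (a i) + (ν (MvPolynomial.coeff k (g i)) - w) + w := by
        gcongr
        exact (h i hi).trans (add_le_add le_rfl (weightedDegPV_le _ k))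
    _ = ν (a i) + ν (MvPolynomial.coeff k (g i)) := by rw [add_assoc, EReal.sub_add_cancel]
    _ ≤ ν (a i * MvPolynomial.coeff k (g i)) := hν.1.add_le_mul _ _ (hν.2 _) (hν.2 _)

end WeightedDegree

section CoordPV

variable {A B ι : Type*} [CommRing A] [CommRing B] [Algebra A B]
  (bs : Module.Basis ι A B) {ν : A → EReal}

def coordPV (bs : Module.Basis ι A B) (ν : A → EReal) (x : B) : EReal :=
  ⨅ i, ν (bs.repr x i)

theorem coordPV_le (x : B) (i : ι) : coordPV bs ν x ≤ ν (bs.repr x i) := iInf_le _ i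

theorem coordPV_ne_bot [Finite ι] (hν : ∀ a, ν a ≠ ⊥) (x : B) :
    coordPV bs ν x ≠ ⊥ := by
  rcases isEmpty_or_nonempty ι with hι | hι
  · simp [coordPV, iInf_of_empty]
  · obtain ⟨i, hi⟩ := exists_eq_ciInf_of_finite (f := fun i => ν (bs.repr x i))
    rw [coordPV, ← hi]
    exact hν _

theorem isNegativeFn_coordPV [Finite ι] (hν : IsNegativeFn ν) :
    IsNegativeFn (coordPV bs ν) := by
  refine ⟨by simp [coordPV, hν.1], fun x hx => ⟨coordPV_ne_bot bs hν.ne_bot x, ?_⟩⟩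
  obtain ⟨i, hi⟩ : ∃ i, bs.repr x i ≠ 0 := by
    by_contra! h
    exact hx (bs.repr.map_eq_zero_iff.mp (Finsupp.ext h))
  exact (coordPV_le bs x i).trans (hν.2 _ hi).2

theorem le_coordPV_sum_smul (hν : IsProperPV ν) {κ : Type*} (s : Finset κ) (c : κ → A)
    (y : κ → B) {z : EReal} (h : ∀ k ∈ s, z ≤ ν (c k) + coordPV bs ν (y k)) :
    z ≤ coordPV bs ν (∑ k ∈ s, c k • y k) := by
  refine le_iInf fun l => ?_
  simp only [map_sum, map_smul, Finsupp.coe_finsetSum, Finset.sum_apply, Finsupp.smul_apply,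
    smul_eq_mul]
  exact hν.1.le_sum _ _ fun k hk => (h k hk).trans
    ((add_le_add le_rfl (coordPV_le bs _ l)).trans (hν.1.add_le_mul _ _ (hν.2 _) (hν.2 _)))

/-- `E` bounds `-coordPV (bs i * bs j)` over pairs of basis vectors. -/
theorem exists_coordPV_add_sub_le_mul [Fintype ι] (hν : IsProperPV ν) :
    ∃ E : ℝ, ∀ u v : B, coordPV bs ν u + coordPV bs ν v - E ≤ coordPV bs ν (u * v) := by
  obtain ⟨r, -, hr⟩ := EReal.exists_coe_le_of_ne_bot
    (fun p : ι × ι => coordPV bs ν (bs p.1 * bs p.2)) fun _ => coordPV_ne_bot bs hν.2 _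
  refine ⟨-r, fun u v => ?_⟩
  have huv : u * v = ∑ p : ι × ι, (bs.repr u p.1 * bs.repr v p.2) • (bs p.1 * bs p.2) := by
    conv_lhs => rw [← bs.sum_repr u, ← bs.sum_repr v]
    rw [Finset.sum_mul_sum, ← Finset.univ_product_univ, Finset.sum_product]
    simp only [smul_mul_smul_comm]
  rw [huv]
  refine le_coordPV_sum_smul bs hν _ _ _ fun p _ => ?_
  calc coordPV bs ν u + coordPV bs ν v - ((-r : ℝ) : EReal)
      ≤ ν (bs.repr u p.1) + ν (bs.repr v p.2) + r := by
        rw [EReal.coe_neg, sub_eq_add_neg, neg_neg]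
        gcongr <;> exact coordPV_le bs _ _
    _ ≤ _ := add_le_add (hν.1.add_le_mul _ _ (hν.2 _) (hν.2 _)) (hr p)

theorem IsLocalizing.coordPV_algebraMap [Finite ι] {a : A} (h : IsLocalizing ν a) :
    IsLocalizing (coordPV bs ν) (algebraMap A B a) := by
  obtain ⟨C, D, hC, hD, h⟩ := h
  refine ⟨C, D, hC, hD, fun n x => ?_⟩
  rcases isEmpty_or_nonempty ι with hι | hι
  · simp [coordPV, iInf_of_empty, EReal.coe_mul_top_of_pos hC, -EReal.coe_mul]
  obtain ⟨i, hi⟩ := exists_eq_ciInf_of_finite (f := fun i => ν (bs.repr x i))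
  calc coordPV bs ν (algebraMap A B a ^ n * x) ≤ ν (a ^ n * bs.repr x i) := by
        simpa [← map_pow, ← Algebra.smul_def] using coordPV_le bs (algebraMap A B a ^ n * x) i
    _ ≤ C * ν (bs.repr x i) + ((n * D : ℝ) : EReal) := h n _
    _ = C * coordPV bs ν x + ((n * D : ℝ) : EReal) := by rw [hi, coordPV]

end CoordPV

section Admissible

variable {A B : Type*} [CommRing A] [CommRing B] [Algebra A B] {ν : A → EReal} {μ : B → EReal}
  {m : ℕ} {π : MvPolynomial (Fin m) A →ₐ[A] B} {d : Fin m → ℝ}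

theorem weightedDegPV_le_of_map_eq
    (hμ : ∀ y, μ y = ⨆ (f) (_ : π f = y), weightedDegPV ν d f) {f : MvPolynomial (Fin m) A}
    {y : B} (hf : π f = y) : weightedDegPV ν d f ≤ μ y := by
  rw [hμ]
  exact le_iSup₂ (f := fun g (_ : π g = y) => weightedDegPV ν d g) f hf

theorem IsAdmissiblePV.isNegativeFn (hν : IsNegativeFn ν) (hμ : IsAdmissiblePV ν μ) :
    IsNegativeFn μ := by
  obtain ⟨m, π, d, hπ, hd, hμ⟩ := hμ
  have hw := isNegativeFn_weightedDegPV hν fun i => (hd i).le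
  refine ⟨top_le_iff.mp (hw.1 ▸ weightedDegPV_le_of_map_eq hμ (map_zero π)),
    fun y hy => ⟨?_, ?_⟩⟩
  · obtain ⟨f, rfl⟩ := hπ y
    exact ne_bot_of_le_ne_bot (hw.ne_bot f) (weightedDegPV_le_of_map_eq hμ rfl)
  · rw [hμ]
    exact iSup₂_le fun f hf => (hw.2 f (ne_zero_of_map (f := π) (hf ▸ hy))).2

theorem exists_coordPV_sub_le {ι : Type*} [Fintype ι] (bs : Module.Basis ι A B)
    (hν : IsNegativePV ν) (hd : ∀ i, 0 ≤ d i) (hπ : Function.Surjective π)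
    (hμ : ∀ y, μ y = ⨆ (f) (_ : π f = y), weightedDegPV ν d f) :
    ∃ D ≥ (0 : ℝ), ∀ y, coordPV bs ν y - D ≤ μ y := by
  choose g hg using fun i => hπ (bs i)
  obtain ⟨r, hr0, hr⟩ := EReal.exists_coe_le_of_ne_bot (fun i => weightedDegPV ν d (g i))
    fun i => (isNegativeFn_weightedDegPV hν.isNegativeFn hd).ne_bot _
  refine ⟨-r, by linarith, fun y => le_trans ?_ (weightedDegPV_le_of_map_eq hμ
    (f := ∑ i, MvPolynomial.C (bs.repr y i) * g i) ?_)⟩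
  · refine le_weightedDegPV_sum_C_mul hν.isProperPV _ _ _ fun i _ => ?_
    rw [EReal.coe_neg, sub_eq_add_neg, neg_neg]
    exact add_le_add (coordPV_le bs y i) (hr i)
  · simp only [map_sum, map_mul, MvPolynomial.algHom_C, hg, ← Algebra.smul_def, bs.sum_repr]

theorem exists_coe_le_coordPV_monomial {ι : Type*} [Fintype ι] (bs : Module.Basis ι A B)
    (hν : IsProperPV ν) (hd : ∀ i, 0 < d i) :
    ∃ c ≥ (1 : ℝ), ∃ H ≥ (0 : ℝ), ∀ k : Fin m →₀ ℕ,
      ((-H - c * ∑ i, (k i : ℝ) * d i : ℝ) : EReal) ≤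
        coordPV bs ν (π (MvPolynomial.monomial k 1)) := by
  obtain ⟨E, hE⟩ := exists_coordPV_add_sub_le_mul bs hν
  obtain ⟨q, -, hq⟩ := EReal.exists_coe_le_of_ne_bot
    (fun j => coordPV bs ν (π (MvPolynomial.X j))) fun j => coordPV_ne_bot bs hν.2 _
  obtain ⟨c, hc1, hc⟩ := exists_forall_le_mul hd (E - q)
  set H := max (-(coordPV bs ν 1).toReal) 0
  have h1 : ((-H : ℝ) : EReal) ≤ coordPV bs ν 1 :=
    le_trans (EReal.coe_le_coe_iff.mpr (neg_le.mpr (le_max_left _ _)))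
      (EReal.coe_toReal_le (coordPV_ne_bot bs hν.2 1))
  refine ⟨c, hc1, H, le_max_right _ _, fun k => ?_⟩
  have hmono : π (MvPolynomial.monomial k 1) = (∏ j, π (MvPolynomial.X j) ^ k j) * 1 := by
    conv_lhs => rw [MvPolynomial.aeval_unique π]
    rw [MvPolynomial.aeval_monomial, map_one, one_mul, mul_one,
      Finsupp.prod_fintype _ _ fun _ => pow_zero _]
    rfl
  rw [hmono]
  refine le_trans (EReal.coe_le_coe_iff.mpr ?_)
    (coe_le_apply_prod_pow_mul hE Finset.univ _ k (fun _ => q) (fun j _ => hq j) h1)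
  rw [sub_eq_add_neg, Finset.mul_sum, ← Finset.sum_neg_distrib]
  gcongr with j
  nlinarith [hc j, (k j).cast_nonneg (α := ℝ)]

theorem exists_mul_weightedDegPV_sub_le_coordPV {ι : Type*} [Fintype ι]
    (bs : Module.Basis ι A B) (hν : IsNegativePV ν) (hd : ∀ i, 0 < d i) :
    ∃ c ≥ (1 : ℝ), ∃ H ≥ (0 : ℝ), ∀ f : MvPolynomial (Fin m) A,
      c * weightedDegPV ν d f - H ≤ coordPV bs ν (π f) := by
  obtain ⟨c, hc1, H, hH, hmono⟩ :=
    exists_coe_le_coordPV_monomial (π := π) bs hν.isProperPV hd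
  refine ⟨c, hc1, H, hH, fun f => ?_⟩
  rcases eq_or_ne f 0 with rfl | hf
  · simp [(isNegativeFn_coordPV bs hν.isNegativeFn).1]
  have hw := isNegativeFn_weightedDegPV hν.isNegativeFn fun i => (hd i).le
  have hπf : π f = ∑ k ∈ f.support,
      MvPolynomial.coeff k f • π (MvPolynomial.monomial k 1) := by
    conv_lhs => rw [f.as_sum]
    simp only [map_sum, ← map_smul, smul_eq_mul, mul_one]
  rw [hπf, ← hw.coe_toReal hf]
  refine le_coordPV_sum_smul bs hν.isProperPV _ _ _ fun k hk => ?_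
  have hck := MvPolynomial.mem_support_iff.mp hk
  have hwk := weightedDegPV_le (ν := ν) (d := d) f k
  rw [← hw.coe_toReal hf, ← hν.isNegativeFn.coe_toReal hck] at hwk
  rw [← hν.isNegativeFn.coe_toReal hck]
  refine le_trans ?_ (add_le_add le_rfl (hmono k))
  norm_cast at hwk ⊢
  nlinarith [hν.isNegativeFn.toReal_nonpos (MvPolynomial.coeff k f)]

theorem IsAdmissiblePV.linearlyEquivalent_coordPV {ι : Type*} [Fintype ι]
    (bs : Module.Basis ι A B) (hν : IsNegativePV ν) (hμ : IsAdmissiblePV ν μ) :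
    LinearlyEquivalent (coordPV bs ν) μ := by
  have hμ_neg := hμ.isNegativeFn hν.isNegativeFn
  have hB := isNegativeFn_coordPV bs hν.isNegativeFn
  obtain ⟨m, π, d, hπ, hd, hμ⟩ := hμ
  have hw := isNegativeFn_weightedDegPV hν.isNegativeFn fun i => (hd i).le
  obtain ⟨D, hD, hle_μ⟩ := exists_coordPV_sub_le bs hν (fun i => (hd i).le) hπ hμ
  obtain ⟨c, hc1, H, hH, hle_B⟩ := exists_mul_weightedDegPV_sub_le_coordPV (π := π) bs hν hd
  refine ⟨1, c, D, H, one_pos, by linarith, hD, hH, fun y => ?_,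
    fun y => by simpa using hle_μ y⟩
  rcases eq_or_ne y 0 with rfl | hy
  · simp [hB.1]
  have hμy : μ y ≤ (((coordPV bs ν y).toReal + H) / c : ℝ) := by
    rw [hμ]
    refine iSup₂_le fun f hf => ?_
    have hf0 : f ≠ 0 := ne_zero_of_map (f := π) (hf ▸ hy)
    have hwf := hle_B f
    rw [hf, ← hB.coe_toReal hy, ← hw.coe_toReal hf0] at hwf
    rw [← hw.coe_toReal hf0]
    norm_cast at hwf ⊢
    rw [le_div_iff₀ (by linarith)]
    linarith
  rw [← hμ_neg.coe_toReal hy] at hμy ⊢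
  rw [← hB.coe_toReal hy]
  norm_cast at hμy ⊢
  rw [le_div_iff₀ (by linarith)] at hμy
  linarith

end Admissible

theorem exists_ne_zero_dvd_algebraMap {A B : Type*} [CommRing A] [Nontrivial A] [CommRing B]
    [Algebra A B] [Algebra.IsIntegral A B] {b : B} (hb : b ∈ B⁰) :
    ∃ a : A, a ≠ 0 ∧ b ∣ algebraMap A B a := by
  obtain ⟨p, hp, hpb⟩ := Algebra.IsIntegral.isIntegral (R := A) b
  obtain ⟨i, hi, hmem⟩ := Ideal.exists_coeff_ne_zero_mem_comap_of_non_zero_divisor_root_mem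
    (I := Ideal.span {b}) (mul_right_mem_nonZeroDivisors_eq_zero_iff hb).mp
    (Ideal.mem_span_singleton_self b) hp.ne_zero hpb
  exact ⟨_, hi, Ideal.mem_span_singleton.mp hmem⟩

/-- If `(A, ν)` is an integral domain with a negative pseudovaluation in
which every nonzero element is localizing, and `B` is a finite free `A`-algebra with an
admissible pseudovaluation `μ`, then every non-zero divisor of `B` is localizing. -/
theorem statement7 (A B : Type*) [CommRing A] [IsDomain A] [CommRing B]
    [Algebra A B] [Module.Finite A B] [Module.Free A B]
    (ν : A → EReal) (hν : IsNegativePV ν)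
    (hloc : ∀ a : A, a ≠ 0 → IsLocalizing ν a)
    (μ : B → EReal) (hμ : IsAdmissiblePV ν μ) :
    ∀ b ∈ nonZeroDivisors B, IsLocalizing μ b := by
  intro b hb
  let bs := Module.Free.chooseBasis A B
  have hνB := isNegativeFn_coordPV bs hν.isNegativeFn
  obtain ⟨E, hE⟩ := exists_coordPV_add_sub_le_mul bs hν.isProperPV
  obtain ⟨a, ha, hba⟩ := exists_ne_zero_dvd_algebraMap (A := A) hb
  have hb_loc : IsLocalizing (coordPV bs ν) b :=
    ((hloc a ha).coordPV_algebraMap bs).of_dvd hνB hE hb hba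
  exact hb_loc.of_linearlyEquivalent hνB (hμ.isNegativeFn hν.isNegativeFn)
    (hμ.linearlyEquivalent_coordPV bs hν) hb
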